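/- If a graph G of dual bonds is m-entangled for some m ≥ 1, then G is entangled. -/

import Mathlib

open Set Topology Metric Bornology MeasureTheory ProbabilityTheory ENNReal

noncomputable section

/-! ## The lattice `ℤ³`, its dual, bonds, dual bonds and plaquettes -/

abbrev R3 : Type := Fin 3 → ℝ
abbrev Zpt : Type := Fin 3 → ℤ
/-- Index for bonds/dual bonds/plaquettes: a base vertex and a direction. -/
abbrev Idx : Type := Zpt × Fin 3

def toR3 (v : Zpt) : R3 := fun i => (v i : ℝ)
def unitVec (i : Fin 3) : R3 := fun j => if j = i then 1 else 0
def unitZ (i : Fin 3) : Zpt := fun j => if j = i then 1 else 0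
def halfVec : R3 := fun _ => 1/2

/-- The endpoints of the bond of `ℤ³` with base vertex `v` and direction `i`. -/
def primalEp (e : Idx) : R3 × R3 := (toR3 e.1, toR3 e.1 + unitVec e.2)
/-- The endpoints of the dual bond (of `(ℤ³)* = ℤ³ + (1/2,1/2,1/2)`) crossing the
plaquette with index `e`. -/
def dualEp (e : Idx) : R3 × R3 :=
  (toR3 e.1 + halfVec - unitVec e.2, toR3 e.1 + halfVec)

/-- The closed unit segment realizing a bond. -/
def seg (ep : Idx → R3 × R3) (e : Idx) : Set R3 := segment ℝ (ep e).1 (ep e).2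

abbrev bondSeg (e : Idx) : Set R3 := seg primalEp e
abbrev dualSeg (e : Idx) : Set R3 := seg dualEp e

/-- The union of the bonds in `E`, as a subset of `ℝ³`. -/
def segUnion (ep : Idx → R3 × R3) (E : Set Idx) : Set R3 := ⋃ e ∈ E, seg ep e

abbrev bondsSet (E : Set Idx) : Set R3 := segUnion primalEp E
abbrev dualSet (E : Set Idx) : Set R3 := segUnion dualEp E

/-- The plaquette with corner `e.1` and normal direction `e.2`: a closed unit square. -/
def plaqSet (e : Idx) : Set R3 :=
  {x | x e.2 = (e.1 e.2 : ℝ) ∧ ∀ j, j ≠ e.2 → (e.1 j : ℝ) ≤ x j ∧ x j ≤ (e.1 j : ℝ) + 1}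

/-- The 1-skeleton of `ℤ³`: all vertices and bonds. -/
def skeleton : Set R3 := ⋃ e : Idx, bondSeg e

/-- The plaquette system determined by the set `E` of present plaquettes:
the whole 1-skeleton of `ℤ³` together with the plaquettes of `E`. -/
def plaqSystem (E : Set Idx) : Set R3 := skeleton ∪ ⋃ e ∈ E, plaqSet e

/-! ## Spheres, entanglement, piecewise-linear sets, null-homotopy -/

abbrev sphere2 : Set (EuclideanSpace ℝ (Fin 3)) := Metric.sphere 0 1
abbrev circleS : Set (EuclideanSpace ℝ (Fin 2)) := Metric.sphere 0 1
abbrev diskS : Set (EuclideanSpace ℝ (Fin 2)) := Metric.closedBall 0 1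

/-- `f` is a topologically embedded 2-sphere in `ℝ³ ∖ X` both of whose complementary
components intersect `X` (equivalently: `X` avoids the image and meets at least two
connected components of the complement of the image). -/
def SphereSeparates (f : sphere2 → R3) (X : Set R3) : Prop :=
  Topology.IsEmbedding f ∧ Disjoint (range f) X ∧
    ∃ x ∈ X, ∃ y ∈ X,
      connectedComponentIn (range f)ᶜ x ≠ connectedComponentIn (range f)ᶜ y

/-- A subset of `ℝ³` is entangled if no embedded 2-sphere separates it. -/
def IsEntangled (X : Set R3) : Prop := ¬ ∃ f : sphere2 → R3, SphereSeparates f X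

/-- `I(X)`: the union of the bounded connected components of `ℝ³ ∖ X`. -/
def interiorRegion (X : Set R3) : Set R3 :=
  {x | x ∉ X ∧ IsBounded (connectedComponentIn Xᶜ x)}

/-- The union of the unbounded connected components of `ℝ³ ∖ X`. -/
def exteriorRegion (X : Set R3) : Set R3 :=
  {x | x ∉ X ∧ ¬ IsBounded (connectedComponentIn Xᶜ x)}

/-- `S` is the underlying space of a finite simplicial complex in `ℝ³` all of whose
simplices have at most 3 vertices (i.e. a finite union of points, closed segments and
closed triangles meeting along common faces). -/
def IsPLSet (S : Set R3) : Prop :=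
  ∃ K : Geometry.SimplicialComplex ℝ R3, K.faces.Finite ∧
    (∀ s ∈ K.faces, s.card ≤ 3) ∧ S = K.space

/-- The loop `γ` bounds a continuous image of a disk inside `P`; for an embedded circle
`γ ⊆ P` this says exactly that `γ` is null-homotopic (contractible) in `P`. -/
def NullHomotopicIn (γ P : Set R3) : Prop :=
  ∃ f : EuclideanSpace ℝ (Fin 2) → R3, ContinuousOn f diskS ∧ f '' diskS ⊆ P ∧
    f '' circleS = γ ∧ InjOn f circleS

/-- A loop of bonds of `ℤ³`: a (finite) union of bonds homeomorphic to a circle. -/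
def IsBondLoop (γ : Set R3) : Prop :=
  (∃ E : Set Idx, E.Finite ∧ γ = bondsSet E) ∧ Nonempty (↥γ ≃ₜ ↥circleS)

/-! ## `m`-entanglement -/

/-- The set of endpoints (vertices) of the bonds in `S`. -/
def vertsOf (ep : Idx → R3 × R3) (S : Set Idx) : Set R3 := ⋃ e ∈ S, {(ep e).1, (ep e).2}

/-- Two points are `m`-entangled-adjacent in `S` if some entangled subset of `S` with at
most `m` bonds contains both. -/
def mAdj (ep : Idx → R3 × R3) (m : ℕ) (S : Set Idx) (v w : R3) : Prop :=
  ∃ T ⊆ S, T.Finite ∧ T.ncard ≤ m ∧ IsEntangled (segUnion ep T) ∧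
    v ∈ segUnion ep T ∧ w ∈ segUnion ep T

/-- A set of bonds is `m`-entangled if the graph on its vertices determined by
`m`-entangled adjacency is connected. -/
def IsMEntangled (ep : Idx → R3 × R3) (m : ℕ) (S : Set Idx) : Prop :=
  ∀ v ∈ vertsOf ep S, ∀ w ∈ vertsOf ep S, Relation.ReflTransGen (mAdj ep m S) v w

/-! A separating sphere for `segUnion ep S` would put two points of it in different components
of its complement. Each bond is connected, so every point is in the component of one of its
endpoints, and consecutive vertices of an `m`-entangled chain share a component because they lie
in a common entangled subgraph that the sphere cannot separate. -/

lemma segUnion_mono {ep : Idx → R3 × R3} {S T : Set Idx} (h : T ⊆ S) :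
    segUnion ep T ⊆ segUnion ep S :=
  biUnion_subset_biUnion_left h

lemma IsEntangled.connectedComponentIn_eq {X : Set R3} (hX : IsEntangled X)
    {f : sphere2 → R3} (hf : IsEmbedding f) (hdisj : Disjoint (range f) X)
    {x y : R3} (hx : x ∈ X) (hy : y ∈ X) :
    connectedComponentIn (range f)ᶜ x = connectedComponentIn (range f)ᶜ y := by
  by_contra hne
  exact hX ⟨f, hf, hdisj, x, hx, y, hy, hne⟩

lemma exists_mem_vertsOf_connectedComponentIn_eq {ep : Idx → R3 × R3} {S : Set Idx}
    {U : Set R3} (hU : segUnion ep S ⊆ U) {x : R3} (hx : x ∈ segUnion ep S) :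
    ∃ v ∈ vertsOf ep S, connectedComponentIn U x = connectedComponentIn U v := by
  obtain ⟨e, he, hxe⟩ := mem_iUnion₂.mp hx
  have hsegU : seg ep e ⊆ U := fun z hz => hU (mem_iUnion₂.mpr ⟨e, he, hz⟩)
  have hseg : seg ep e ⊆ connectedComponentIn U x :=
    (convex_segment _ _).isPreconnected.subset_connectedComponentIn hxe hsegU
  exact ⟨(ep e).1, mem_iUnion₂.mpr ⟨e, he, by simp⟩,
    connectedComponentIn_eq (hseg (left_mem_segment ℝ _ _))⟩

lemma connectedComponentIn_eq_of_reflTransGen_mAdj {ep : Idx → R3 × R3} {m : ℕ}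
    {S : Set Idx} {f : sphere2 → R3} (hf : IsEmbedding f)
    (hdisj : Disjoint (range f) (segUnion ep S)) {v w : R3}
    (hvw : Relation.ReflTransGen (mAdj ep m S) v w) :
    connectedComponentIn (range f)ᶜ v = connectedComponentIn (range f)ᶜ w := by
  induction hvw with
  | refl => rfl
  | tail _ hadj ih =>
    obtain ⟨T, hTS, -, -, hT, hbT, hcT⟩ := hadj
    exact ih.trans
      (hT.connectedComponentIn_eq hf (hdisj.mono_right (segUnion_mono hTS)) hbT hcT)

theorem m_entangled_is_entangled_general (m : ℕ) (G : Set Idx)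
    (hG : IsMEntangled dualEp m G) :
    IsEntangled (dualSet G) := by
  rintro ⟨f, hf, hdisj, x, hx, y, hy, hne⟩
  have hU : dualSet G ⊆ (range f)ᶜ := hdisj.symm.subset_compl_right
  obtain ⟨v, hv, hxv⟩ := exists_mem_vertsOf_connectedComponentIn_eq hU hx
  obtain ⟨w, hw, hyw⟩ := exists_mem_vertsOf_connectedComponentIn_eq hU hy
  exact hne <| hxv.trans <|
    (connectedComponentIn_eq_of_reflTransGen_mAdj hf hdisj (hG v hv w hw)).trans hyw.symm

/-- If a graph `G` of dual bonds is `m`-entangled for some `m ≥ 1`, then `G` is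
entangled. -/
theorem m_entangled_is_entangled (m : ℕ) (hm : 1 ≤ m) (G : Set Idx)
    (hG : IsMEntangled dualEp m G) :
    IsEntangled (dualSet G) :=
  m_entangled_is_entangled_general m G hG

end
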